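/- Let r ≥ 1, let X ⊆ ℝⁿ, and let x ∈ X. Suppose there exist an open set U ∋ x in ℝⁿ, an open set V ⊆ ℝⁿ, and a bijection φ : U → V with both φ and φ⁻¹ of class C^r, such that φ(x) = 0 and φ(X ∩ U) = V ∩ (ℝ^d × {0}^{n-d}). Then there exist a permutation σ of the coordinates of ℝⁿ, an open box B ⊆ ℝⁿ containing x, an open set W ⊆ ℝ^d, and a C^r map g : W → ℝ^{n-d}, such that the image of X ∩ B under the coordinate permutation σ equals the graph {(w, g(w)) : w ∈ W}. -/

import Mathlib

/-!
The chart inverse `ψ`, restricted to the flat slice `ℝ^d × 0`, parametrizes `X` near `x`, and its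
derivative there is injective because `φ ∘ ψ = id`. Hence some `d` rows of that derivative form an
invertible `d × d` block. After permuting these coordinates to the front, the inverse function
theorem inverts the first `d` coordinates of the parametrization, and the remaining coordinates
become a `C^r` function of the first `d`.
-/

open Function Set Filter Topology

theorem Function.Embedding.exists_perm_comp_eq {α β : Type*} [Finite β] (f g : α ↪ β) :
    ∃ σ : Equiv.Perm β, ⇑σ ∘ f = g := by
  classical
  let e := (Equiv.ofInjective f f.injective).symm.trans (Equiv.ofInjective g g.injective)
  refine ⟨e.extendSubtype, funext fun a => ?_⟩
  simp [e, Equiv.extendSubtype_apply_of_mem e (f a) ⟨a, rfl⟩]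

/-- A linearly independent family of rows of `A` spanning all its rows has exactly `d` members:
at most `d` by independence, at least `d` because these rows already determine `A v`. -/
theorem LinearMap.exists_embedding_bijective_restrict {K ι : Type*} [Field K] [Finite ι] {d : ℕ}
    (A : (Fin d → K) →ₗ[K] ι → K) (hA : Injective A) :
    ∃ e : Fin d ↪ ι, Bijective fun v k => A v (e k) := by
  classical
  have := Fintype.ofFinite ι
  let f : ι → Module.Dual K (Fin d → K) := fun i => LinearMap.proj i ∘ₗ A
  obtain ⟨κ, a, ha, hspan, hli⟩ := exists_linearIndependent' K f
  have := Fintype.ofInjective a ha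
  let Q : (Fin d → K) →ₗ[K] κ → K := LinearMap.pi fun k => f (a k)
  have hQ : Injective Q := by
    refine (injective_iff_map_eq_zero Q).2 fun v hv =>
      (injective_iff_map_eq_zero A).1 hA v (funext fun i => ?_)
    have hker : Submodule.span K (Set.range f) ≤ LinearMap.ker (Module.Dual.eval K _ v) := by
      rw [← hspan, Submodule.span_le]
      rintro _ ⟨k, rfl⟩
      exact congrFun hv k
    exact hker (Submodule.subset_span ⟨i, rfl⟩)
  have hcard : Fintype.card κ = d := by
    refine le_antisymm (hli.fintype_card_le_finrank.trans ?_) ?_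
    · simp [Subspace.dual_finrank_eq]
    · simpa using Q.finrank_le_finrank_of_injective hQ
  let e := Fintype.equivFinOfCardEq hcard
  let Q' := LinearMap.funLeft K K e.symm ∘ₗ Q
  have hQ' : Injective Q' := e.symm.surjective.injective_comp_right.comp hQ
  exact ⟨e.symm.toEmbedding.trans ⟨a, ha⟩, hQ', Q'.injective_iff_surjective.1 hQ'⟩

theorem LinearMap.exists_perm_bijective_take {K : Type*} [Field K] {d n : ℕ} (hd : d ≤ n)
    (A : (Fin d → K) →ₗ[K] Fin n → K) (hA : Injective A) :
    ∃ σ : Equiv.Perm (Fin n), Bijective fun v => Fin.take d hd (A v ∘ σ) := by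
  obtain ⟨e, he⟩ := A.exists_embedding_bijective_restrict hA
  obtain ⟨σ, hσ⟩ := (Fin.castLEEmb hd).exists_perm_comp_eq e
  rw [← hσ] at he
  exact ⟨σ, he⟩

def Fin.drop {α : Type*} {n : ℕ} (m : ℕ) (h : m ≤ n) (v : Fin n → α) : Fin (n - m) → α :=
  fun k => v ⟨m + k, by omega⟩

theorem Fin.append_take_drop {α : Type*} {m n : ℕ} (h : m ≤ n) (v : Fin n → α) :
    Fin.append (Fin.take m h v) (Fin.drop m h v) ∘ Fin.cast (by omega : n = m + (n - m)) = v := by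
  funext i
  by_cases hi : (i : ℕ) < m
  · have : Fin.cast (by omega : n = m + (n - m)) i = Fin.castAdd (n - m) ⟨i, hi⟩ := rfl
    rw [comp_apply, this, Fin.append_left, Fin.take_apply]
    rfl
  · have : Fin.cast (by omega : n = m + (n - m)) i = Fin.natAdd m ⟨i - m, by omega⟩ :=
      Fin.ext (by simp; omega)
    rw [comp_apply, this, Fin.append_right, Fin.drop]
    congr 1
    ext
    simp only
    omega

theorem image_eq_graph_of_leftInvOn {A α : Type*} {m n : ℕ} (h : m ≤ n) {γ : A → Fin n → α}
    {γinv : (Fin m → α) → A} {s : Set A} (hinv : LeftInvOn γinv (fun a => Fin.take m h (γ a)) s) :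
    γ '' s = (fun p => Fin.append p (Fin.drop m h (γ (γinv p))) ∘ Fin.cast (by omega)) ''
      ((fun a => Fin.take m h (γ a)) '' s) := by
  rw [image_image]
  refine image_congr fun a ha => ?_
  rw [hinv ha, Fin.append_take_drop]

def IsPermutedGraph (r : ℕ) {d n : ℕ} (hd : d ≤ n) (σ : Equiv.Perm (Fin n))
    (S : Set (Fin n → ℝ)) : Prop :=
  ∃ (W : Set (Fin d → ℝ)) (g : (Fin d → ℝ) → Fin (n - d) → ℝ), IsOpen W ∧ ContDiffOn ℝ r g W ∧
    (fun z : Fin n → ℝ => z ∘ σ) '' S =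
      (fun w => Fin.append w (g w) ∘ Fin.cast (by omega : n = d + (n - d))) '' W

theorem ContDiffAt.exists_leftInvOn_contDiffOn {𝕂 E F : Type*} [RCLike 𝕂] [NormedAddCommGroup E]
    [NormedSpace 𝕂 E] [CompleteSpace E] [NormedAddCommGroup F] [NormedSpace 𝕂 F] {f : E → F}
    {f' : E ≃L[𝕂] F} {a : E} {r : ℕ} (hf : ContDiffAt 𝕂 r f a)
    (hf' : HasFDerivAt f (f' : E →L[𝕂] F) a) (hr : r ≠ 0) :
    ∃ N, IsOpen N ∧ a ∈ N ∧ (∀ s ⊆ N, IsOpen s → IsOpen (f '' s)) ∧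
      ∃ g, LeftInvOn g f N ∧ ContDiffOn 𝕂 r g (f '' N) := by
  have hr' : (r : WithTop ℕ∞) ≠ 0 := by exact_mod_cast hr
  let Φ := hf.toOpenPartialHomeomorph f hf' hr'
  let g := hf.localInverse hf' hr'
  have hsource : ∀ᶠ x in 𝓝 a, x ∈ Φ.source :=
    Φ.open_source.mem_nhds (hf.mem_toOpenPartialHomeomorph_source hf' hr')
  have hgood : ∀ᶠ x in 𝓝 a, x ∈ Φ.source ∧ g (f x) = x ∧ ContDiffAt 𝕂 r g (f x) :=
    hsource.and <|
      (hf.hasStrictFDerivAt' hf' hr').eventually_left_inverse.and <|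
        hf.continuousAt.eventually ((hf.to_localInverse hf' hr').eventually (by simp))
  obtain ⟨N, hNgood, hN, haN⟩ := eventually_nhds_iff.1 hgood
  refine ⟨N, hN, haN, fun s hsN hs => Φ.isOpen_image_of_subset_source hs
    fun x hx => (hNgood x (hsN hx)).1, g, fun x hx => (hNgood x hx).2.1, ?_⟩
  rintro _ ⟨x, hx, rfl⟩
  exact (hNgood x hx).2.2.contDiffWithinAt

theorem injective_fderiv_of_comp_eventuallyEq_id {𝕜 E F : Type*} [NontriviallyNormedField 𝕜]
    [NormedAddCommGroup E] [NormedSpace 𝕜 E] [NormedAddCommGroup F] [NormedSpace 𝕜 F]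
    {γ : E → F} {ρ : F → E} {a : E} (hρ : DifferentiableAt 𝕜 ρ (γ a))
    (hγ : DifferentiableAt 𝕜 γ a) (h : ρ ∘ γ =ᶠ[𝓝 a] id) :
    Injective (fderiv 𝕜 γ a) := by
  have hcomp : (fderiv 𝕜 ρ (γ a)).comp (fderiv 𝕜 γ a) = ContinuousLinearMap.id 𝕜 E := by
    rw [← fderiv_comp a hρ hγ, h.fderiv_eq, fderiv_id]
  exact LeftInverse.injective fun v => congr($hcomp v)

/-- Choose coordinates `σ` in which the first `d` components of `γ` have invertible derivative at
`w₀` and invert them by the inverse function theorem; the continuous left inverse `ρ` forces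
every point of `γ '' D` close to `γ w₀` to come from the domain of that local inverse. -/
theorem exists_nhds_isPermutedGraph {r d n : ℕ} (hr : r ≠ 0) (hd : d ≤ n)
    {γ : (Fin d → ℝ) → Fin n → ℝ} {ρ : (Fin n → ℝ) → Fin d → ℝ} {D : Set (Fin d → ℝ)}
    {U : Set (Fin n → ℝ)} {w₀ : Fin d → ℝ} (hD : IsOpen D) (hw₀ : w₀ ∈ D) (hU : IsOpen U)
    (hγw₀ : γ w₀ ∈ U) (hγ : ContDiffOn ℝ r γ D) (hρ : DifferentiableOn ℝ ρ U)
    (hργ : LeftInvOn ρ γ D) :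
    ∃ σ : Equiv.Perm (Fin n), ∃ G ∈ 𝓝 (γ w₀), ∀ B ⊆ G, IsOpen B →
      IsPermutedGraph r hd σ (γ '' (D ∩ γ ⁻¹' B)) := by
  have hr' : (r : WithTop ℕ∞) ≠ 0 := by exact_mod_cast hr
  have hγw₀C : ContDiffAt ℝ r γ w₀ := hγ.contDiffAt (hD.mem_nhds hw₀)
  have hγw₀D : DifferentiableAt ℝ γ w₀ := hγw₀C.differentiableAt hr'
  obtain ⟨σ, hσ⟩ := LinearMap.exists_perm_bijective_take hd (fderiv ℝ γ w₀ : _ →ₗ[ℝ] _) <|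
    injective_fderiv_of_comp_eventuallyEq_id (hρ.differentiableAt (hU.mem_nhds hγw₀)) hγw₀D <|
      eventually_of_mem (hD.mem_nhds hw₀) hργ
  let P : (Fin n → ℝ) →L[ℝ] Fin d → ℝ :=
    ContinuousLinearMap.pi fun k => ContinuousLinearMap.proj (σ (Fin.castLE hd k))
  let P' : (Fin d → ℝ) ≃L[ℝ] Fin d → ℝ :=
    (LinearEquiv.ofBijective (P.toLinearMap ∘ₗ fderiv ℝ γ w₀) hσ).toContinuousLinearEquiv
  have hP' : HasFDerivAt (P ∘ γ) (P' : (Fin d → ℝ) →L[ℝ] Fin d → ℝ) w₀ :=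
    P.hasFDerivAt.comp w₀ hγw₀D.hasFDerivAt
  obtain ⟨N, hN, hw₀N, hNimage, γinv, hγinv, hγinvC⟩ :=
    (P.contDiff.contDiffAt.comp w₀ hγw₀C).exists_leftInvOn_contDiffOn hP' hr
  refine ⟨σ, ρ ⁻¹' (N ∩ D), (hρ.continuousOn.continuousAt (hU.mem_nhds hγw₀)).preimage_mem_nhds ?_,
    fun B hBG hB => ?_⟩
  · rw [hργ hw₀]
    exact inter_mem (hN.mem_nhds hw₀N) (hD.mem_nhds hw₀)
  set s := D ∩ γ ⁻¹' B
  have hsN : s ⊆ N := fun w hw => hργ hw.1 ▸ (hBG hw.2).1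
  have hγinv_mapsTo : MapsTo γinv ((P ∘ γ) '' s) D := by
    rintro _ ⟨w, hw, rfl⟩
    rw [hγinv (hsN hw)]
    exact hw.1
  have hγγinv : ContDiffOn ℝ r (fun p => γ (γinv p)) ((P ∘ γ) '' s) :=
    hγ.comp (hγinvC.mono (image_mono hsN)) hγinv_mapsTo
  refine ⟨(P ∘ γ) '' s, fun p => Fin.drop d hd (γ (γinv p) ∘ σ),
    hNimage s hsN (hγ.continuousOn.isOpen_inter_preimage hD hB),
    contDiffOn_pi.2 fun k => contDiffOn_pi.1 hγγinv _, ?_⟩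
  rw [image_image]
  exact image_eq_graph_of_leftInvOn hd (hγinv.mono hsN)

theorem exists_pi_Ioo_subset_of_mem_nhds {ι : Type*} [Fintype ι] {x : ι → ℝ} {s : Set (ι → ℝ)}
    (hs : s ∈ 𝓝 x) :
    ∃ lo hi : ι → ℝ, (∀ i, lo i < hi i) ∧ x ∈ pi univ (fun i => Ioo (lo i) (hi i)) ∧
      pi univ (fun i => Ioo (lo i) (hi i)) ⊆ s := by
  obtain ⟨ε, hε, hball⟩ := Metric.mem_nhds_iff.1 hs
  have hbox : pi univ (fun i => Ioo (x i - ε) (x i + ε)) = Metric.ball x ε := by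
    simp only [ball_pi x hε, Real.ball_eq_Ioo]
  refine ⟨fun i => x i - ε, fun i => x i + ε, fun i => by linarith, ?_, hbox ▸ hball⟩
  rw [hbox]
  exact Metric.mem_ball_self hε

def coordInclusion (d n : ℕ) : (Fin d → ℝ) →L[ℝ] Fin n → ℝ :=
  ContinuousLinearMap.pi fun i =>
    if h : (i : ℕ) < d then ContinuousLinearMap.proj ⟨i, h⟩ else 0

theorem coordInclusion_apply {d n : ℕ} (w : Fin d → ℝ) (i : Fin n) :
    coordInclusion d n w i = if h : (i : ℕ) < d then w ⟨i, h⟩ else 0 := by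
  simp only [coordInclusion, ContinuousLinearMap.pi_apply]
  split_ifs <;> rfl

theorem take_coordInclusion {d n : ℕ} (hd : d ≤ n) (w : Fin d → ℝ) :
    Fin.take d hd (coordInclusion d n w) = w := by
  funext k
  simp [coordInclusion_apply]

theorem range_coordInclusion {d n : ℕ} (hd : d ≤ n) :
    range (coordInclusion d n) = {y | ∀ i : Fin n, d ≤ (i : ℕ) → y i = 0} := by
  ext y
  refine ⟨?_, fun hy => ⟨Fin.take d hd y, funext fun i => ?_⟩⟩
  · rintro ⟨w, rfl⟩ i hi
    simp [coordInclusion_apply, hi]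
  · rw [coordInclusion_apply]
    split_ifs with hi
    · rfl
    · exact (hy i (not_lt.1 hi)).symm

theorem inter_eq_image_of_image_inter_eq {α β ι : Type*} {φ : α → β} {ψ : β → α} {j : ι → β}
    {X U B : Set α} {V : Set β} (hψφ : LeftInvOn ψ φ U) (himg : φ '' (X ∩ U) = V ∩ range j)
    (hB : B ⊆ U) :
    X ∩ B = (ψ ∘ j) '' (j ⁻¹' V ∩ (ψ ∘ j) ⁻¹' B) := by
  ext y
  constructor
  · rintro ⟨hyX, hyB⟩
    obtain ⟨hyV, w, hw⟩ : φ y ∈ V ∩ range j := himg ▸ mem_image_of_mem φ ⟨hyX, hB hyB⟩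
    have hwy : ψ (j w) = y := by rw [hw, hψφ (hB hyB)]
    exact ⟨w, ⟨show j w ∈ V by rwa [hw], show ψ (j w) ∈ B from hwy ▸ hyB⟩, hwy⟩
  · rintro ⟨w, ⟨hwV, hwB⟩, rfl⟩
    obtain ⟨u, ⟨huX, huU⟩, hu⟩ : j w ∈ φ '' (X ∩ U) := himg ▸ ⟨hwV, w, rfl⟩
    refine ⟨?_, hwB⟩
    rw [comp_apply, ← hu, hψφ huU]
    exact huX

theorem stmt_12 (r n d : ℕ) (hr : 1 ≤ r) (hd : d ≤ n)
    (X : Set (Fin n → ℝ)) (x : Fin n → ℝ)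
    (hchart : ∃ (U V : Set (Fin n → ℝ)) (φ ψ : (Fin n → ℝ) → (Fin n → ℝ)),
      IsOpen U ∧ x ∈ U ∧ IsOpen V ∧
      ContDiffOn ℝ r φ U ∧ ContDiffOn ℝ r ψ V ∧
      Set.BijOn φ U V ∧ (∀ y ∈ U, ψ (φ y) = y) ∧
      φ x = 0 ∧
      φ '' (X ∩ U) = V ∩ {y | ∀ i : Fin n, d ≤ (i : ℕ) → y i = 0}) :
    ∃ (σ : Equiv.Perm (Fin n)) (B : Set (Fin n → ℝ)),
      (∃ lo hi : Fin n → ℝ, (∀ i, lo i < hi i) ∧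
        B = Set.pi Set.univ fun i => Set.Ioo (lo i) (hi i)) ∧
      x ∈ B ∧
      ∃ (W : Set (Fin d → ℝ)) (g : (Fin d → ℝ) → (Fin (n - d) → ℝ)),
        IsOpen W ∧ ContDiffOn ℝ r g W ∧
        (fun z : Fin n → ℝ => z ∘ σ) '' (X ∩ B) =
          (fun w : Fin d → ℝ =>
            (Fin.append w (g w)) ∘ Fin.cast (by omega : n = d + (n - d))) '' W := by
  obtain ⟨U, V, φ, ψ, hU, hxU, hV, hφ, hψ, hbij, hψφ, hφx, himg⟩ := hchart
  have hr0 : r ≠ 0 := by omega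
  let j := coordInclusion d n
  have hj0 : j 0 ∈ V := by simpa [j, ← hφx] using hbij.mapsTo hxU
  have hψj0 : (ψ ∘ j) 0 = x := by rw [comp_apply, map_zero, ← hφx, hψφ x hxU]
  have hφψ : RightInvOn ψ φ V := hbij.image_eq ▸ LeftInvOn.rightInvOn_image hψφ
  obtain ⟨σ, G, hG, hgraph⟩ := exists_nhds_isPermutedGraph hr0 hd (γ := ψ ∘ j)
    (ρ := fun y => Fin.take d hd (φ y)) (hV.preimage j.continuous) hj0 hU (hψj0 ▸ hxU)
    (hψ.comp j.contDiff.contDiffOn (mapsTo_preimage _ _))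
    (differentiableOn_pi.2 fun k =>
      differentiableOn_pi.1 (hφ.differentiableOn (by exact_mod_cast hr0)) _)
    fun w hw => by simp only [comp_apply, hφψ hw, j, take_coordInclusion]
  obtain ⟨lo, hi, hlohi, hxB, hBGU⟩ :=
    exists_pi_Ioo_subset_of_mem_nhds (inter_mem hG (hU.mem_nhds (hψj0 ▸ hxU)))
  refine ⟨σ, _, ⟨lo, hi, hlohi, rfl⟩, hψj0 ▸ hxB, ?_⟩
  rw [inter_eq_image_of_image_inter_eq hψφ (himg.trans (by rw [range_coordInclusion hd]))
    (hBGU.trans inter_subset_right)]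
  exact hgraph _ (hBGU.trans inter_subset_left) (isOpen_set_pi finite_univ fun _ _ => isOpen_Ioo)
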